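/- arXiv:2203.09667 — 7 statements merged into one kernel-verified Lean document; each statement's English description precedes it below -/
import Mathlib

section
/- In a de Vries algebra, if F is a concordant filter and a ∉ F, then there exists a concordant filter G extending F such that no concordant filter extending G contains a. -/
/-- A de Vries algebra structure on a complete Boolean algebra `B`:
a subordination relation `prec` satisfying axioms (A1)-(A7). -/
structure DeVries (B : Type*) [CompleteBooleanAlgebra B] where
  prec : B → B → Prop
  A1 : prec ⊤ ⊤
  A2 : ∀ {a b : B}, prec a b → a ≤ b
  A3 : ∀ {a b c d : B}, a ≤ b → prec b c → c ≤ d → prec a d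
  A4 : ∀ {a b c : B}, prec a b → prec a c → prec a (b ⊓ c)
  A5 : ∀ {a b : B}, prec a b → prec bᶜ aᶜ
  A6 : ∀ {a c : B}, prec a c → ∃ b, prec a b ∧ prec b c
  A7 : ∀ {a : B}, a ≠ ⊥ → ∃ b, b ≠ ⊥ ∧ prec b a

variable {B : Type*} [CompleteBooleanAlgebra B]

/-- A (proper) filter on `B`, as a set. -/
def IsProperFilter (F : Set B) : Prop :=
  ⊤ ∈ F ∧ ⊥ ∉ F ∧ (∀ a b : B, a ∈ F → a ≤ b → b ∈ F) ∧
    (∀ a b : B, a ∈ F → b ∈ F → a ⊓ b ∈ F)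

/-- A concordant filter: a proper filter in which every element has a ≺-predecessor. -/
def Concordant (V : DeVries B) (F : Set B) : Prop :=
  IsProperFilter F ∧ ∀ a ∈ F, ∃ b ∈ F, V.prec b a

/- Zorn's lemma gives a concordant filter `G ⊇ F` maximal among those omitting `a`. If a concordant
`H ⊇ G` contained `a`, it would contain some `b ≺ a`, so `aᶜ ≺ bᶜ`. Adjoining to `G` every `d` with
`aᶜ ≺ d` yields, by interpolation (A6), a concordant filter still omitting `a`; by maximality it is
`G` itself, so `bᶜ ∈ G ⊆ H`, contradicting `b ∈ H`. -/

namespace IsProperFilter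

variable {F : Set B}

theorem compl_notMem (hF : IsProperFilter F) {b : B} (hb : b ∈ F) : bᶜ ∉ F := fun hbc =>
  hF.2.1 (by simpa using hF.2.2.2 b bᶜ hb hbc)

theorem sUnion {c : Set (Set B)} (hc : ∀ s ∈ c, IsProperFilter s)
    (hchain : IsChain (· ⊆ ·) c) (hne : c.Nonempty) : IsProperFilter (⋃₀ c) := by
  obtain ⟨s, hs⟩ := hne
  refine ⟨⟨s, hs, (hc s hs).1⟩, ?_, ?_, ?_⟩
  · rintro ⟨t, ht, hbot⟩
    exact (hc t ht).2.1 hbot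
  · rintro x y ⟨t, ht, hx⟩ hxy
    exact ⟨t, ht, (hc t ht).2.2.1 x y hx hxy⟩
  · rintro x y ⟨t, ht, hx⟩ ⟨u, hu, hy⟩
    rcases hchain.total ht hu with htu | hut
    · exact ⟨u, hu, (hc u hu).2.2.2 x y (htu hx) hy⟩
    · exact ⟨t, ht, (hc t ht).2.2.2 x y hx (hut hy)⟩

end IsProperFilter

theorem Concordant.sUnion {V : DeVries B} {c : Set (Set B)} (hc : ∀ s ∈ c, Concordant V s)
    (hchain : IsChain (· ⊆ ·) c) (hne : c.Nonempty) : Concordant V (⋃₀ c) := by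
  refine ⟨IsProperFilter.sUnion (fun s hs => (hc s hs).1) hchain hne, ?_⟩
  rintro x ⟨s, hs, hx⟩
  obtain ⟨y, hy, hyx⟩ := (hc s hs).2 x hx
  exact ⟨y, ⟨s, hs, hy⟩, hyx⟩

namespace DeVries

variable (V : DeVries B)

theorem prec_top (a : B) : V.prec a ⊤ :=
  V.A3 le_top V.A1 le_rfl

theorem prec_inf_inf {a b c d : B} (hab : V.prec a b) (hcd : V.prec c d) :
    V.prec (a ⊓ c) (b ⊓ d) :=
  V.A4 (V.A3 inf_le_left hab le_rfl) (V.A3 inf_le_right hcd le_rfl)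

/-- The filter generated by `G` and the elements `≺`-above `c`. -/
def adjoin (G : Set B) (c : B) : Set B :=
  {y | ∃ g ∈ G, ∃ d, V.prec c d ∧ g ⊓ d ≤ y}

variable {V}

theorem subset_adjoin (G : Set B) (c : B) : G ⊆ V.adjoin G c := fun g hg =>
  ⟨g, hg, ⊤, V.prec_top c, inf_le_left⟩

theorem mem_adjoin_of_prec {G : Set B} (hG : ⊤ ∈ G) {c d : B} (hcd : V.prec c d) :
    d ∈ V.adjoin G c :=
  ⟨⊤, hG, d, hcd, inf_le_right⟩

theorem mem_of_mem_adjoin_compl {G : Set B} (hG : IsProperFilter G) {a : B}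
    (ha : a ∈ V.adjoin G aᶜ) : a ∈ G := by
  obtain ⟨g, hg, d, hd, hgd⟩ := ha
  have hga : g ⊓ aᶜ ≤ a := (inf_le_inf_left g (V.A2 hd)).trans hgd
  rw [← sdiff_eq, sdiff_le_iff, sup_idem] at hga
  exact hG.2.2.1 g a hg hga

theorem concordant_adjoin_compl {G : Set B} (hG : Concordant V G) {a : B} (ha : a ∉ G) :
    Concordant V (V.adjoin G aᶜ) := by
  have upward : ∀ x y, x ∈ V.adjoin G aᶜ → x ≤ y → y ∈ V.adjoin G aᶜ :=
    fun x y ⟨g, hg, d, hd, hgd⟩ hxy => ⟨g, hg, d, hd, hgd.trans hxy⟩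
  refine ⟨⟨subset_adjoin G aᶜ hG.1.1, fun hbot => ha ?_, upward, ?_⟩, ?_⟩
  · exact mem_of_mem_adjoin_compl hG.1 (upward ⊥ a hbot bot_le)
  · rintro x y ⟨g, hg, d, hd, hgd⟩ ⟨g', hg', d', hd', hgd'⟩
    exact ⟨g ⊓ g', hG.1.2.2.2 g g' hg hg', d ⊓ d', V.A4 hd hd',
      le_inf ((inf_le_inf inf_le_left inf_le_left).trans hgd)
        ((inf_le_inf inf_le_right inf_le_right).trans hgd')⟩
  · rintro y ⟨g, hg, d, hd, hgd⟩
    obtain ⟨g', hg', hg'g⟩ := hG.2 g hg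
    obtain ⟨d', hd', hd'd⟩ := V.A6 hd
    exact ⟨g' ⊓ d', ⟨g', hg', d', hd', le_rfl⟩, V.A3 le_rfl (V.prec_inf_inf hg'g hd'd) hgd⟩

theorem notMem_of_maximal {G H : Set B} {a : B}
    (hG : Maximal (fun G => Concordant V G ∧ a ∉ G) G) (hH : Concordant V H) (hGH : G ⊆ H) : a ∉ H := by
  intro haH
  obtain ⟨b, hbH, hba⟩ := hH.2 a haH
  have hadjoin : V.adjoin G aᶜ ⊆ G :=
    hG.le_of_ge ⟨concordant_adjoin_compl hG.1.1 hG.1.2, fun h =>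
      hG.1.2 (mem_of_mem_adjoin_compl hG.1.1.1 h)⟩ (subset_adjoin G aᶜ)
  have hbcG : bᶜ ∈ G := hadjoin (mem_adjoin_of_prec hG.1.1.1.1 (V.A5 hba))
  exact hH.1.compl_notMem hbH (hGH hbcG)

theorem exists_maximal_concordant_notMem {F : Set B} (hF : Concordant V F) {a : B} (ha : a ∉ F) :
    ∃ G, F ⊆ G ∧ Maximal (fun G => Concordant V G ∧ a ∉ G) G :=
  zorn_subset_nonempty {G | Concordant V G ∧ a ∉ G}
    (fun c hc hchain hne => ⟨⋃₀ c, ⟨Concordant.sUnion (fun _ hs => (hc hs).1) hchain hne,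
      fun ⟨_, hs, has⟩ => (hc hs).2 has⟩, fun _ hs => Set.subset_sUnion_of_mem hs⟩) F ⟨hF, ha⟩

end DeVries

theorem stmt2 (V : DeVries B) (F : Set B) (hF : Concordant V F) (a : B) (ha : a ∉ F) :
    ∃ G : Set B, Concordant V G ∧ F ⊆ G ∧
      ∀ H : Set B, Concordant V H → G ⊆ H → a ∉ H := by
  obtain ⟨G, hFG, hG⟩ := DeVries.exists_maximal_concordant_notMem hF ha
  exact ⟨G, hG.1.1, hFG, fun H hH hGH => DeVries.notMem_of_maximal hG hH hGH⟩
end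

section
/- In a de Vries algebra, for every nonzero element a there exists a concordant filter containing a; consequently, the map a ↦ â = {F concordant : a ∈ F} is injective and â ⊆ b̂ iff a ≤ b. -/
variable {B : Type*} [CompleteBooleanAlgebra B]

/-- The dual filter space: the set of concordant filters. -/
def SV (V : DeVries B) : Type _ := {F : Set B // Concordant V F}

/-- Basic open set `â = {F : a ∈ F}`. -/
def hatt (V : DeVries B) (a : B) : Set (SV V) := {F : SV V | a ∈ F.1}

/-- The Stone-like topology on `SV V`, generated by the sets `â`. -/
instance instTopSV (V : DeVries B) : TopologicalSpace (SV V) :=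
  TopologicalSpace.generateFrom {U : Set (SV V) | ∃ a : B, U = hatt V a}

/-- Downward closure under the inclusion (specialization) order of filters. -/
def dclF (V : DeVries B) (A : Set (SV V)) : Set (SV V) :=
  {F : SV V | ∃ G ∈ A, F.1 ⊆ G.1}

/-- Interior in the upset topology of the inclusion order: all extensions lie in `A`. -/
def upIntF (V : DeVries B) (A : Set (SV V)) : Set (SV V) :=
  {F : SV V | ∀ G : SV V, F.1 ⊆ G.1 → G ∈ A}

/-!
Starting from `a ≠ ⊥`, axiom (A7) yields a chain `a = a₀ ≻ a₁ ≻ a₂ ≻ ⋯` of nonzero elements.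
The filter generated by the chain is proper, and it is concordant because every `aₙ` has the
predecessor `aₙ₊₁`. If `a ≰ b`, a concordant filter containing `a \ b ≠ ⊥` lies in `â` but not
in `b̂`.
-/

namespace IsProperFilter

variable {F : Set B}

theorem mem_of_le (hF : IsProperFilter F) {a b : B} (ha : a ∈ F) (hab : a ≤ b) : b ∈ F :=
  hF.2.2.1 a b ha hab

theorem notMem_of_sdiff_mem (hF : IsProperFilter F) {a b : B} (hab : a \ b ∈ F) : b ∉ F :=
  fun hb => hF.2.1 (by simpa only [inf_sdiff_self_right] using hF.2.2.2 b (a \ b) hb hab)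

end IsProperFilter

theorem isProperFilter_of_antitone {f : ℕ → B} (hf : Antitone f) (hne : ∀ n, f n ≠ ⊥) :
    IsProperFilter {c | ∃ n, f n ≤ c} := by
  refine ⟨⟨0, le_top⟩, fun ⟨n, hn⟩ => hne n (le_bot_iff.mp hn), ?_, ?_⟩
  · rintro c d ⟨n, hn⟩ hcd
    exact ⟨n, hn.trans hcd⟩
  · rintro c d ⟨m, hm⟩ ⟨n, hn⟩
    exact ⟨max m n, le_inf ((hf (le_max_left m n)).trans hm) ((hf (le_max_right m n)).trans hn)⟩

namespace DeVries

variable (V : DeVries B)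

theorem exists_seq_prec_ne_bot {a : B} (ha : a ≠ ⊥) :
    ∃ f : ℕ → B, f 0 = a ∧ (∀ n, f n ≠ ⊥) ∧ ∀ n, V.prec (f (n + 1)) (f n) := by
  choose g hg_ne hg_prec using fun x : {x : B // x ≠ ⊥} => V.A7 x.2
  let step : {x : B // x ≠ ⊥} → {x : B // x ≠ ⊥} := fun x => ⟨g x, hg_ne x⟩
  refine ⟨fun n => (step^[n] ⟨a, ha⟩).1, rfl, fun n => (step^[n] ⟨a, ha⟩).2, fun n => ?_⟩
  simpa only [Function.iterate_succ_apply'] using hg_prec (step^[n] ⟨a, ha⟩)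

theorem exists_concordant_mem {a : B} (ha : a ≠ ⊥) : ∃ F : Set B, Concordant V F ∧ a ∈ F := by
  obtain ⟨f, rfl, hne, hprec⟩ := V.exists_seq_prec_ne_bot ha
  have hf : Antitone f := antitone_nat_of_succ_le fun n => V.A2 (hprec n)
  refine ⟨_, ⟨isProperFilter_of_antitone hf hne, ?_⟩, ⟨0, le_rfl⟩⟩
  rintro c ⟨n, hn⟩
  exact ⟨f (n + 1), ⟨n + 1, le_rfl⟩, V.A3 le_rfl (hprec n) hn⟩

theorem hatt_subset_hatt_iff (a b : B) : hatt V a ⊆ hatt V b ↔ a ≤ b := by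
  refine ⟨fun hsub => ?_, fun hab F haF => F.2.1.mem_of_le haF hab⟩
  by_contra hab
  obtain ⟨F, hF, hmem⟩ := V.exists_concordant_mem (sdiff_eq_bot_iff.not.mpr hab)
  have hb : b ∈ F := hsub (show (⟨F, hF⟩ : SV V) ∈ hatt V a from hF.1.mem_of_le hmem sdiff_le)
  exact hF.1.notMem_of_sdiff_mem hmem hb

theorem hatt_injective : Function.Injective (hatt V) := fun a b h =>
  le_antisymm ((V.hatt_subset_hatt_iff a b).mp h.le) ((V.hatt_subset_hatt_iff b a).mp h.ge)

end DeVries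

theorem stmt3 (V : DeVries B) :
    (∀ a : B, a ≠ ⊥ → ∃ F : Set B, Concordant V F ∧ a ∈ F) ∧
    Function.Injective (hatt V) ∧
    (∀ a b : B, hatt V a ⊆ hatt V b ↔ a ≤ b) :=
  ⟨fun _ => V.exists_concordant_mem, V.hatt_injective, V.hatt_subset_hatt_iff⟩
end

section
/- Let V be a de Vries algebra with dual filter space S_V. For every a ∈ V, the set â is order-regular open: the interior (in the upset topology of the specialization order, which is inclusion of filters) of the downward closure of â equals â. -/
variable {B : Type*} [CompleteBooleanAlgebra B]

/-!
If `a ∉ F`, enlarge `F` by the concordant filter `{x | aᶜ ≺ x}`. The enlargement `G` is still a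
proper concordant filter, since `b ⊓ x = ⊥` with `aᶜ ≺ x` forces `b ≤ xᶜ ≤ a`. No concordant
`H ⊇ G` contains `a`: a predecessor `c ≺ a` in `H` would give `aᶜ ≺ cᶜ`, so `c, cᶜ ∈ H`.
Hence `F` is not in the order-interior of `↓â`.
-/

lemma IsProperFilter.compl_notMem_s5 {F : Set B} (hF : IsProperFilter F) {c : B} (hc : c ∈ F) :
    cᶜ ∉ F := fun hc' => hF.2.1 (by simpa using hF.2.2.2 c cᶜ hc hc')

def filterJoin (F K : Set B) : Set B := {x | ∃ b ∈ F, ∃ k ∈ K, b ⊓ k ≤ x}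

lemma subset_filterJoin_left {F K : Set B} (hK : ⊤ ∈ K) : F ⊆ filterJoin F K :=
  fun b hb => ⟨b, hb, ⊤, hK, inf_le_left⟩

lemma subset_filterJoin_right {F K : Set B} (hF : ⊤ ∈ F) : K ⊆ filterJoin F K :=
  fun k hk => ⟨⊤, hF, k, hk, inf_le_right⟩

lemma Concordant.filterJoin {V : DeVries B} {F K : Set B} (hF : Concordant V F)
    (hK : Concordant V K) (hFK : ∀ b ∈ F, ∀ k ∈ K, b ⊓ k ≠ ⊥) :
    Concordant V (filterJoin F K) := by
  refine ⟨⟨⟨⊤, hF.1.1, ⊤, hK.1.1, le_top⟩, ?_, ?_, ?_⟩, ?_⟩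
  · rintro ⟨b, hb, k, hk, hbot⟩
    exact hFK b hb k hk (le_bot_iff.mp hbot)
  · rintro x y ⟨b, hb, k, hk, hle⟩ hxy
    exact ⟨b, hb, k, hk, hle.trans hxy⟩
  · rintro x y ⟨b, hb, k, hk, hx⟩ ⟨b', hb', k', hk', hy⟩
    refine ⟨b ⊓ b', hF.1.2.2.2 b b' hb hb', k ⊓ k', hK.1.2.2.2 k k' hk hk', le_inf ?_ ?_⟩
    · exact le_trans (inf_le_inf inf_le_left inf_le_left) hx
    · exact le_trans (inf_le_inf inf_le_right inf_le_right) hy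
  · rintro x ⟨b, hb, k, hk, hle⟩
    obtain ⟨b', hb', hb'b⟩ := hF.2 b hb
    obtain ⟨k', hk', hk'k⟩ := hK.2 k hk
    have hprec : V.prec (b' ⊓ k') (b ⊓ k) :=
      V.A4 (V.A3 inf_le_left hb'b le_rfl) (V.A3 inf_le_right hk'k le_rfl)
    exact ⟨b' ⊓ k', ⟨b', hb', k', hk', le_rfl⟩, V.A3 le_rfl hprec hle⟩

lemma DeVries.concordant_setOf_prec (V : DeVries B) {b : B} (hb : b ≠ ⊥) :
    Concordant V {x | V.prec b x} := by
  refine ⟨⟨V.A3 le_top V.A1 le_rfl, fun h => hb (le_bot_iff.mp (V.A2 h)), ?_, ?_⟩, ?_⟩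
  · exact fun x y hx hxy => V.A3 le_rfl hx hxy
  · exact fun x y hx hy => V.A4 hx hy
  · intro x hx
    obtain ⟨y, hby, hyx⟩ := V.A6 hx
    exact ⟨y, hby, hyx⟩

lemma exists_le_forall_notMem_of_notMem (V : DeVries B) {F : SV V} {a : B} (ha : a ∉ F.1) :
    ∃ G : SV V, F.1 ⊆ G.1 ∧ ∀ H : SV V, G.1 ⊆ H.1 → a ∉ H.1 := by
  have hFup := F.2.1.2.2.1
  have hac : aᶜ ≠ ⊥ := fun h => ha (compl_eq_bot.mp h ▸ F.2.1.1)
  have hcompl_le : ∀ {k : B}, V.prec aᶜ k → kᶜ ≤ a := fun hk => by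
    simpa using V.A2 (V.A5 hk)
  have hdisj : ∀ b ∈ F.1, ∀ k ∈ {x | V.prec aᶜ x}, b ⊓ k ≠ ⊥ := fun b hb k hk hbk =>
    ha (hFup b a hb ((le_compl_iff_disjoint_right.mpr (disjoint_iff.mpr hbk)).trans
      (hcompl_le hk)))
  let G : SV V := ⟨_, F.2.filterJoin (V.concordant_setOf_prec hac) hdisj⟩
  refine ⟨G, subset_filterJoin_left (V.concordant_setOf_prec hac).1.1, fun H hGH haH => ?_⟩
  obtain ⟨c, hcH, hca⟩ := H.2.2 a haH
  have hcG : cᶜ ∈ G.1 := subset_filterJoin_right F.2.1.1 (V.A5 hca)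
  exact H.2.1.compl_notMem_s5 hcH (hGH hcG)

theorem stmt5 (V : DeVries B) (a : B) :
    upIntF V (dclF V (hatt V a)) = hatt V a := by
  ext F
  refine ⟨fun hF => ?_, fun ha G hFG => ⟨G, hFG ha, subset_rfl⟩⟩
  by_contra ha
  obtain ⟨G, hFG, hG⟩ := exists_le_forall_notMem_of_notMem V ha
  obtain ⟨H, haH, hGH⟩ := hF G hFG
  exact hG H hGH haH
end

section
/- Let V be a de Vries algebra with dual filter space S_V. Then every regular open subset of S_V is of the form â for some a ∈ V; hence the map a ↦ â is a Boolean isomorphism from V onto the Boolean algebra of regular open subsets of S_V. -/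
variable {B : Type*} [CompleteBooleanAlgebra B]

/-- Regular open: `U` equals the interior of its closure. -/
def RegOpen {X : Type*} [TopologicalSpace X] (U : Set X) : Prop :=
  interior (closure U) = U

/-!
Every nonzero `c` lies in a concordant filter: iterating (A7) gives a ≺-descending chain of
nonzero elements below `c`, whose upward closure is concordant. Consequently `a ↦ â` reflects
`≤`, and `(closure â)ᶜ = (aᶜ)^`, since `F` misses the closure of `â` exactly when some `c ∈ F`
has `c ⊓ a = ⊥`. A regular open set `U` is the union of the `b̂ ⊆ U`; with `a` the supremum of
these `b`, we get `U ⊆ â ⊆ closure U`, and `â` open forces `â ⊆ interior (closure U) = U`.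
-/

namespace SV

variable {V : DeVries B} (F : SV V) {a b : B}

theorem top_mem : ⊤ ∈ F.1 := F.2.1.1

theorem bot_notMem : ⊥ ∉ F.1 := F.2.1.2.1

theorem mem_of_le (ha : a ∈ F.1) (hab : a ≤ b) : b ∈ F.1 := F.2.1.2.2.1 a b ha hab

theorem inf_mem_iff : a ⊓ b ∈ F.1 ↔ a ∈ F.1 ∧ b ∈ F.1 :=
  ⟨fun h => ⟨F.mem_of_le h inf_le_left, F.mem_of_le h inf_le_right⟩,
    fun h => F.2.1.2.2.2 a b h.1 h.2⟩

theorem ne_bot_of_mem (ha : a ∈ F.1) : a ≠ ⊥ := by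
  rintro rfl
  exact F.bot_notMem ha

end SV

section DualSpace

variable (V : DeVries B)

theorem concordant_upperClosure_of_prec_chain {d : ℕ → B} (hd : ∀ n, d n ≠ ⊥)
    (hprec : ∀ n, V.prec (d (n + 1)) (d n)) : Concordant V {x | ∃ n, d n ≤ x} := by
  have hanti : Antitone d := antitone_nat_of_succ_le fun n => V.A2 (hprec n)
  refine ⟨⟨⟨0, le_top⟩, ?_, ?_, ?_⟩, ?_⟩
  · rintro ⟨n, hn⟩
    exact hd n (le_bot_iff.mp hn)
  · rintro a b ⟨n, hn⟩ hab
    exact ⟨n, hn.trans hab⟩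
  · rintro a b ⟨m, hm⟩ ⟨n, hn⟩
    exact ⟨max m n, le_inf ((hanti (le_max_left m n)).trans hm)
      ((hanti (le_max_right m n)).trans hn)⟩
  · rintro a ⟨n, hn⟩
    exact ⟨d (n + 1), ⟨n + 1, le_rfl⟩, V.A3 le_rfl (hprec n) hn⟩

theorem SV.exists_mem_of_ne_bot {c : B} (hc : c ≠ ⊥) : ∃ F : SV V, c ∈ F.1 := by
  have hpred : ∀ x : {x : B // x ≠ ⊥}, ∃ y : {x : B // x ≠ ⊥}, V.prec y x :=
    fun x => let ⟨y, hy, hyx⟩ := V.A7 x.2; ⟨⟨y, hy⟩, hyx⟩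
  choose pred hpred using hpred
  let d : ℕ → B := fun n => (pred^[n] ⟨c, hc⟩).1
  have hprec : ∀ n, V.prec (d (n + 1)) (d n) := fun n => by
    simp only [d, Function.iterate_succ_apply']
    exact hpred _
  exact ⟨⟨_, concordant_upperClosure_of_prec_chain V (fun n => (pred^[n] ⟨c, hc⟩).2) hprec⟩,
    0, le_rfl⟩

theorem hatt_inf (a b : B) : hatt V (a ⊓ b) = hatt V a ∩ hatt V b :=
  Set.ext fun F => F.inf_mem_iff

theorem hatt_bot : hatt V ⊥ = ∅ :=
  Set.eq_empty_of_forall_notMem fun F => F.bot_notMem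

theorem hatt_top : hatt V ⊤ = Set.univ :=
  Set.eq_univ_of_forall fun F => F.top_mem

theorem hatt_nonempty_iff {a : B} : (hatt V a).Nonempty ↔ a ≠ ⊥ :=
  ⟨fun ⟨F, hF⟩ => F.ne_bot_of_mem hF, SV.exists_mem_of_ne_bot V⟩

theorem hatt_subset_hatt_iff {a b : B} : hatt V a ⊆ hatt V b ↔ a ≤ b := by
  refine ⟨fun h => ?_, fun hab F hF => F.mem_of_le hF hab⟩
  have hempty : hatt V (a ⊓ bᶜ) = ∅ := by
    rw [hatt_inf, ← Set.subset_empty_iff, ← hatt_bot V, ← inf_compl_self b, hatt_inf]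
    exact Set.inter_subset_inter_left _ h
  by_contra hab
  have hne : a ⊓ bᶜ ≠ ⊥ := fun h0 => hab (disjoint_compl_right_iff.mp (disjoint_iff.mpr h0))
  exact ((hatt_nonempty_iff V).mpr hne).ne_empty hempty

theorem hatt_injective : Function.Injective (hatt V) := fun _ _ h =>
  le_antisymm ((hatt_subset_hatt_iff V).mp h.le) ((hatt_subset_hatt_iff V).mp h.ge)

theorem isOpen_hatt (a : B) : IsOpen (hatt V a) :=
  TopologicalSpace.GenerateOpen.basic _ ⟨a, rfl⟩

theorem isTopologicalBasis_hatt : TopologicalSpace.IsTopologicalBasis (Set.range (hatt V)) := by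
  refine TopologicalSpace.isTopologicalBasis_of_subbasis_of_finiteInter ?_
    ⟨⟨⊤, hatt_top V⟩, ?_⟩
  · exact congrArg TopologicalSpace.generateFrom (Set.ext fun U => exists_congr fun a => eq_comm)
  · rintro _ ⟨a, rfl⟩ _ ⟨b, rfl⟩
    exact ⟨a ⊓ b, hatt_inf V a b⟩

theorem mem_closure_iff_forall_hatt {U : Set (SV V)} {F : SV V} :
    F ∈ closure U ↔ ∀ c ∈ F.1, (hatt V c ∩ U).Nonempty := by
  simp only [(isTopologicalBasis_hatt V).mem_closure_iff, Set.forall_mem_range, hatt,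
    Set.mem_ofPred_eq]

theorem compl_closure_hatt (a : B) : (closure (hatt V a))ᶜ = hatt V aᶜ := by
  ext F
  simp only [Set.mem_compl_iff, mem_closure_iff_forall_hatt, ← hatt_inf, hatt_nonempty_iff,
    not_forall, not_not, exists_prop]
  refine ⟨fun ⟨c, hc, hca⟩ => F.mem_of_le hc ?_, fun ha => ⟨aᶜ, ha, compl_inf_self a⟩⟩
  exact le_compl_iff_disjoint_right.mpr (disjoint_iff.mpr hca)

theorem regOpen_hatt (a : B) : RegOpen (hatt V a) := by
  rw [RegOpen, ← compl_compl (closure (hatt V a)), compl_closure_hatt, interior_compl,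
    compl_closure_hatt, compl_compl]

theorem hatt_sSup_subset_closure (S : Set B) :
    hatt V (sSup S) ⊆ closure (⋃ b ∈ S, hatt V b) := by
  intro F hF
  rw [mem_closure_iff_forall_hatt]
  intro c hc
  have hne : sSup S ⊓ c ≠ ⊥ := F.ne_bot_of_mem (F.inf_mem_iff.mpr ⟨hF, hc⟩)
  obtain ⟨b, hbS, hbc⟩ : ∃ b ∈ S, b ⊓ c ≠ ⊥ := by
    by_contra! h
    exact hne (by rw [sSup_inf_eq]; exact iSup₂_eq_bot.mpr h)
  obtain ⟨G, hG⟩ := (hatt_nonempty_iff V).mpr hbc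
  rw [hatt_inf] at hG
  exact ⟨G, hG.2, Set.mem_biUnion hbS hG.1⟩

theorem exists_hatt_eq_of_regOpen {U : Set (SV V)} (hU : RegOpen U) : ∃ a : B, U = hatt V a := by
  have hUopen : IsOpen U := hU ▸ isOpen_interior
  refine ⟨sSup {b | hatt V b ⊆ U}, subset_antisymm (fun F hF => ?_) ?_⟩
  · obtain ⟨_, ⟨b, rfl⟩, hFb, hbU⟩ :=
      (isTopologicalBasis_hatt V).exists_subset_of_mem_open hF hUopen
    exact F.mem_of_le hFb (le_sSup hbU)
  · have hclosure : hatt V (sSup {b | hatt V b ⊆ U}) ⊆ closure U :=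
      (hatt_sSup_subset_closure V _).trans (closure_mono (Set.iUnion₂_subset fun _ hb => hb))
    exact (interior_maximal hclosure (isOpen_hatt V _)).trans hU.le

end DualSpace

theorem stmt6 (V : DeVries B) :
    (∀ U : Set (SV V), RegOpen U → ∃ a : B, U = hatt V a) ∧
    (∀ a : B, RegOpen (hatt V a)) ∧
    Function.Injective (hatt V) ∧
    (∀ a b : B, hatt V (a ⊓ b) = hatt V a ∩ hatt V b) ∧
    (∀ a : B, hatt V aᶜ = (closure (hatt V a))ᶜ) ∧
    hatt V ⊥ = ∅ ∧ hatt V ⊤ = Set.univ :=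
  ⟨fun _ => exists_hatt_eq_of_regOpen V, regOpen_hatt V, hatt_injective V, hatt_inf V,
    fun a => (compl_closure_hatt V a).symm, hatt_bot V, hatt_top V⟩
end

section
/- Let h : V1 → V2 be a de Vries morphism between de Vries algebras. For any concordant filter F on V2, the set ↠(h⁻¹[F]) = {a : ∃b ≺₁ a, h(b) ∈ F} is a concordant filter on V1. -/
variable {B : Type*} [CompleteBooleanAlgebra B]

/-- A de Vries morphism between de Vries algebras. -/
structure DeVriesMor {B₁ B₂ : Type*} [CompleteBooleanAlgebra B₁] [CompleteBooleanAlgebra B₂]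
    (V₁ : DeVries B₁) (V₂ : DeVries B₂) where
  toFun : B₁ → B₂
  mV1 : toFun ⊥ = ⊥
  mV2 : ∀ a b : B₁, toFun (a ⊓ b) = toFun a ⊓ toFun b
  mV3 : ∀ a b : B₁, V₁.prec a b → V₂.prec (toFun aᶜ)ᶜ (toFun b)
  mV4 : ∀ a : B₁, toFun a = sSup {x : B₂ | ∃ b : B₁, V₁.prec b a ∧ x = toFun b}

/-!
The preimage `h⁻¹[F]` of a proper filter is a proper filter, since `h` preserves `⊥`, finite
meets and, by (V3) applied to `⊤ ≺ ⊤`, also `⊤`. For any proper filter `G` of a de Vries algebra, `↠G = {a | ∃ b ∈ G, b ≺ a}` (`G` is upward closed) is again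
a proper filter, and interpolation (A6) gives every element of it a `≺`-predecessor in `↠G`.
-/

namespace DeVriesMor

variable {B₁ B₂ : Type*} [CompleteBooleanAlgebra B₁] [CompleteBooleanAlgebra B₂]
  {V₁ : DeVries B₁} {V₂ : DeVries B₂} (h : DeVriesMor V₁ V₂)

theorem map_top : h.toFun ⊤ = ⊤ := by
  have h_prec := h.mV3 ⊤ ⊤ V₁.A1
  rw [compl_top, h.mV1, compl_bot] at h_prec
  exact top_le_iff.mp (V₂.A2 h_prec)

theorem monotone : Monotone h.toFun := fun a b hab => by
  rw [← inf_eq_left.mpr hab, h.mV2]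
  exact inf_le_right

end DeVriesMor

namespace IsProperFilter

theorem preimage {B₁ B₂ : Type*} [CompleteBooleanAlgebra B₁] [CompleteBooleanAlgebra B₂]
    {V₁ : DeVries B₁} {V₂ : DeVries B₂} (h : DeVriesMor V₁ V₂) {F : Set B₂}
    (hF : IsProperFilter F) : IsProperFilter (h.toFun ⁻¹' F) := by
  obtain ⟨h_top, h_bot, h_up, h_inf⟩ := hF
  refine ⟨?_, ?_, ?_, ?_⟩
  · simpa only [Set.mem_preimage, h.map_top] using h_top
  · simpa only [Set.mem_preimage, h.mV1] using h_bot
  · exact fun a b ha hab => h_up _ _ ha (h.monotone hab)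
  · intro a b ha hb
    simpa only [Set.mem_preimage, h.mV2] using h_inf _ _ ha hb

theorem concordant_setOf_exists_prec (V : DeVries B) {G : Set B} (hG : IsProperFilter G) :
    Concordant V {a | ∃ b, V.prec b a ∧ b ∈ G} := by
  obtain ⟨h_top, h_bot, -, h_inf⟩ := hG
  refine ⟨⟨⟨⊤, V.A1, h_top⟩, ?_, ?_, ?_⟩, ?_⟩
  · rintro ⟨b, hb, hbG⟩
    rw [le_bot_iff.mp (V.A2 hb)] at hbG
    exact h_bot hbG
  · rintro a a' ⟨b, hb, hbG⟩ haa'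
    exact ⟨b, V.A3 le_rfl hb haa', hbG⟩
  · rintro a a' ⟨b, hb, hbG⟩ ⟨b', hb', hb'G⟩
    exact ⟨b ⊓ b', V.A4 (V.A3 inf_le_left hb le_rfl) (V.A3 inf_le_right hb' le_rfl),
      h_inf _ _ hbG hb'G⟩
  · rintro a ⟨b, hb, hbG⟩
    obtain ⟨c, hbc, hca⟩ := V.A6 hb
    exact ⟨c, ⟨b, hbc, hbG⟩, hca⟩

end IsProperFilter

theorem stmt16 {B₁ B₂ : Type*} [CompleteBooleanAlgebra B₁] [CompleteBooleanAlgebra B₂]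
    (V₁ : DeVries B₁) (V₂ : DeVries B₂) (h : DeVriesMor V₁ V₂)
    (F : Set B₂) (hF : Concordant V₂ F) :
    Concordant V₁ {a : B₁ | ∃ b : B₁, V₁.prec b a ∧ h.toFun b ∈ F} :=
  (hF.1.preimage h).concordant_setOf_exists_prec V₁
end

section
/- Let h : V1 → V2 be a de Vries morphism, F a concordant filter on V2 and G a concordant filter on V1 with ↠(h⁻¹[F]) ⊆ G. Then H = {a ∈ V2 : a ≥ ¬h(¬c) ∧ d for some c ∈ G, d ∈ F} is a concordant filter on V2 containing F, and G ⊆ ↠(h⁻¹[H]); i.e., Λ(h) is weakly dense. -/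
variable {B : Type*} [CompleteBooleanAlgebra B]

/-!
`H` is the filter generated by `F` and the elements `¬h(¬c)`, `c ∈ G`. It is proper: if
`¬h(¬c) ∧ d = 0` with `d ∈ F`, then `h(¬c) ∈ F`, and for `c' ≺ c` in `G` we get `¬c ≺ ¬c'`, so
`¬c' ∈ ↠(h⁻¹[F]) ⊆ G`, forcing `0 = c' ∧ ¬c' ∈ G`. Concordance of `G` and `F` passes to `H`
because `c' ≺ c` gives `¬h(¬c') ≺ h(c) ≤ ¬h(¬c)`. Finally, for `a ∈ G` pick `c ≺ b ≺ a` in `G`;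
then `¬h(¬c) ≤ h(b)`, so `h(b) ∈ H` and `a ∈ ↠(h⁻¹[H])`.
-/

namespace DeVriesMor

variable {B₁ B₂ : Type*} [CompleteBooleanAlgebra B₁] [CompleteBooleanAlgebra B₂]
  {V₁ : DeVries B₁} {V₂ : DeVries B₂} (h : DeVriesMor V₁ V₂)

theorem le_compl_map_compl (a : B₁) : h.toFun a ≤ (h.toFun aᶜ)ᶜ :=
  le_compl_iff_disjoint_right.2 <| disjoint_iff.2 <| by rw [← h.mV2, inf_compl_eq_bot, h.mV1]

theorem compl_map_compl_le_of_prec {a b : B₁} (hab : V₁.prec a b) :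
    (h.toFun aᶜ)ᶜ ≤ h.toFun b :=
  V₂.A2 (h.mV3 a b hab)

theorem prec_compl_map_compl {a b : B₁} (hab : V₁.prec a b) :
    V₂.prec (h.toFun aᶜ)ᶜ (h.toFun bᶜ)ᶜ :=
  V₂.A3 le_rfl (h.mV3 a b hab) (h.le_compl_map_compl b)

def extendFilter (G : Set B₁) (F : Set B₂) : Set B₂ :=
  {a | ∃ c ∈ G, ∃ d ∈ F, (h.toFun cᶜ)ᶜ ⊓ d ≤ a}

variable {h} {G : Set B₁} {F : Set B₂}

theorem subset_extendFilter (hG : ⊤ ∈ G) : F ⊆ h.extendFilter G F :=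
  fun d hd => ⟨⊤, hG, d, hd, inf_le_right⟩

theorem inf_mem_extendFilter (hG : IsProperFilter G) (hF : IsProperFilter F) {a b : B₂}
    (ha : a ∈ h.extendFilter G F) (hb : b ∈ h.extendFilter G F) :
    a ⊓ b ∈ h.extendFilter G F := by
  obtain ⟨c₁, hc₁, d₁, hd₁, hle₁⟩ := ha
  obtain ⟨c₂, hc₂, d₂, hd₂, hle₂⟩ := hb
  refine ⟨c₁ ⊓ c₂, hG.2.2.2 _ _ hc₁ hc₂, d₁ ⊓ d₂, hF.2.2.2 _ _ hd₁ hd₂, ?_⟩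
  have hmono : Monotone fun c => (h.toFun cᶜ)ᶜ :=
    fun _ _ hc => compl_le_compl (h.monotone (compl_le_compl hc))
  calc (h.toFun (c₁ ⊓ c₂)ᶜ)ᶜ ⊓ (d₁ ⊓ d₂)
      ≤ ((h.toFun c₁ᶜ)ᶜ ⊓ d₁) ⊓ ((h.toFun c₂ᶜ)ᶜ ⊓ d₂) :=
        le_inf (inf_le_inf (hmono inf_le_left) inf_le_left)
          (inf_le_inf (hmono inf_le_right) inf_le_right)
    _ ≤ a ⊓ b := inf_le_inf hle₁ hle₂

theorem bot_notMem_extendFilter (hG : Concordant V₁ G) (hF : IsProperFilter F)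
    (hsub : {a : B₁ | ∃ b : B₁, V₁.prec b a ∧ h.toFun b ∈ F} ⊆ G) :
    ⊥ ∉ h.extendFilter G F := by
  rintro ⟨c, hcG, d, hdF, hle⟩
  have hd : d ≤ h.toFun cᶜ := by
    rw [← compl_compl (h.toFun cᶜ)]
    exact le_compl_iff_disjoint_left.2 (disjoint_iff_inf_le.2 hle)
  obtain ⟨c', hc'G, hc'c⟩ := hG.2 c hcG
  have hc'compl : c'ᶜ ∈ G := hsub ⟨cᶜ, V₁.A5 hc'c, hF.2.2.1 d _ hdF hd⟩
  have := hG.1.2.2.2 _ _ hc'G hc'compl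
  rw [inf_compl_eq_bot] at this
  exact hG.1.2.1 this

theorem concordant_extendFilter (hG : Concordant V₁ G) (hF : Concordant V₂ F)
    (hsub : {a : B₁ | ∃ b : B₁, V₁.prec b a ∧ h.toFun b ∈ F} ⊆ G) :
    Concordant V₂ (h.extendFilter G F) := by
  refine ⟨⟨⟨⊤, hG.1.1, ⊤, hF.1.1, le_top⟩, bot_notMem_extendFilter hG hF.1 hsub,
    fun a b ⟨c, hc, d, hd, hle⟩ hab => ⟨c, hc, d, hd, hle.trans hab⟩,
    fun _ _ => inf_mem_extendFilter hG.1 hF.1⟩, ?_⟩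
  rintro a ⟨c, hcG, d, hdF, hle⟩
  obtain ⟨c', hc'G, hc'c⟩ := hG.2 c hcG
  obtain ⟨d', hd'F, hd'd⟩ := hF.2 d hdF
  refine ⟨(h.toFun c'ᶜ)ᶜ ⊓ d', ⟨c', hc'G, d', hd'F, le_rfl⟩, V₂.A3 le_rfl ?_ hle⟩
  exact V₂.A4 (V₂.A3 inf_le_left (h.prec_compl_map_compl hc'c) le_rfl)
    (V₂.A3 inf_le_right hd'd le_rfl)

theorem subset_prec_preimage_extendFilter (hG : Concordant V₁ G) (hF : ⊤ ∈ F) :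
    G ⊆ {a : B₁ | ∃ b : B₁, V₁.prec b a ∧ h.toFun b ∈ h.extendFilter G F} := by
  intro a haG
  obtain ⟨b, hbG, hba⟩ := hG.2 a haG
  obtain ⟨c, hcG, hcb⟩ := hG.2 b hbG
  exact ⟨b, hba, c, hcG, ⊤, hF, inf_le_left.trans (h.compl_map_compl_le_of_prec hcb)⟩

end DeVriesMor

open DeVriesMor in
theorem stmt18 {B₁ B₂ : Type*} [CompleteBooleanAlgebra B₁] [CompleteBooleanAlgebra B₂]
    (V₁ : DeVries B₁) (V₂ : DeVries B₂) (h : DeVriesMor V₁ V₂)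
    (F : Set B₂) (hF : Concordant V₂ F)
    (G : Set B₁) (hG : Concordant V₁ G)
    (hsub : {a : B₁ | ∃ b : B₁, V₁.prec b a ∧ h.toFun b ∈ F} ⊆ G) :
    Concordant V₂ {a : B₂ | ∃ c ∈ G, ∃ d ∈ F, (h.toFun cᶜ)ᶜ ⊓ d ≤ a} ∧
    F ⊆ {a : B₂ | ∃ c ∈ G, ∃ d ∈ F, (h.toFun cᶜ)ᶜ ⊓ d ≤ a} ∧
    G ⊆ {a : B₁ | ∃ b : B₁, V₁.prec b a ∧
      h.toFun b ∈ {x : B₂ | ∃ c ∈ G, ∃ d ∈ F, (h.toFun cᶜ)ᶜ ⊓ d ≤ x}} :=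
  ⟨concordant_extendFilter hG hF hsub, subset_extendFilter hG.1.1,
    subset_prec_preimage_extendFilter hG hF.1.1⟩
end

section
/- Let L be a compact regular frame. For all a, c ∈ L − {1}: a ∨ c = 1 if and only if there exists b ≺ a with ¬b ≺ c (where ≺ is the rather-below relation). Equivalently, the upper Vietoris topology on L − {1} generated by the sets □a = {b : a ∨ b = 1} coincides with the topology generated by the sets ǎ = {b : ¬a ≺ b}. -/
/-! The elements rather below `a` form a sup-closed set whose join is `a` by regularity, so
compactness turns `c ⊔ a = ⊤` into `c ⊔ b = ⊤` for a single `b ≺ a`; then `b ≤ ¬¬b` gives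
`¬b ≺ c`. Conversely, `¬b ⊓ ¬¬b = ⊥` lets distributivity collapse `(a ⊔ ¬b) ⊓ (c ⊔ ¬¬b)`
below `a ⊔ c`. -/

/-- The rather-below relation in a frame: `a ≺ b` iff `b ⊔ ¬a = ⊤`,
where `¬a` is the pseudo-complement (Heyting complement). -/
def RatherBelow {L : Type*} [Order.Frame L] (a b : L) : Prop := b ⊔ aᶜ = ⊤

/-- A compact frame: every subset with join `⊤` has a finite subset with join `⊤`. -/
def CompactFrame (L : Type*) [Order.Frame L] : Prop :=
  ∀ S : Set L, sSup S = ⊤ → ∃ T ⊆ S, T.Finite ∧ sSup T = ⊤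

/-- A regular frame: every element is the join of the elements rather below it. -/
def RegularFrame (L : Type*) [Order.Frame L] : Prop :=
  ∀ a : L, a = sSup {b : L | RatherBelow b a}

section Frame

variable {L : Type*} [Order.Frame L]

theorem ratherBelow_bot (a : L) : RatherBelow ⊥ a := by
  simp [RatherBelow]

theorem RatherBelow.sup {x y a : L} (hx : RatherBelow x a) (hy : RatherBelow y a) :
    RatherBelow (x ⊔ y) a := by
  unfold RatherBelow at *
  rw [compl_sup, sup_inf_left, hx, hy, inf_top_eq]

theorem supClosed_ratherBelow (a : L) : SupClosed {b : L | RatherBelow b a} :=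
  fun _ hx _ hy => hx.sup hy

theorem ratherBelow_compl_of_sup_eq_top {b c : L} (h : c ⊔ b = ⊤) : RatherBelow bᶜ c :=
  top_unique (h ▸ sup_le_sup_left le_compl_compl c)

theorem sup_eq_top_of_ratherBelow_of_ratherBelow_compl {a b c : L}
    (hb : RatherBelow b a) (hbc : RatherBelow bᶜ c) : a ⊔ c = ⊤ := by
  unfold RatherBelow at hb hbc
  refine top_unique ?_
  calc (⊤ : L) = (a ⊔ bᶜ) ⊓ (c ⊔ bᶜᶜ) := by rw [hb, hbc, inf_top_eq]
    _ = a ⊓ (c ⊔ bᶜᶜ) ⊔ (bᶜ ⊓ c ⊔ bᶜ ⊓ bᶜᶜ) := by rw [inf_sup_right, inf_sup_left bᶜ]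
    _ ≤ a ⊔ c := by
      rw [inf_compl_self, sup_bot_eq]
      exact sup_le_sup inf_le_left inf_le_right

theorem CompactFrame.exists_mem_sup_eq_top (hc : CompactFrame L) {s : Set L}
    (hs : SupClosed s) (hbot : ⊥ ∈ s) {c : L} (h : c ⊔ sSup s = ⊤) :
    ∃ b ∈ s, c ⊔ b = ⊤ := by
  obtain ⟨T, hTs, hTfin, hT⟩ := hc (insert c s) (by rw [sSup_insert, h])
  have hmem : sSup (T \ {c}) ∈ s :=
    hs.sSup_mem hTfin.sdiff hbot fun x hx => (hTs hx.1).resolve_left hx.2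
  refine ⟨_, hmem, top_unique ?_⟩
  calc (⊤ : L) = sSup T := hT.symm
    _ ≤ sSup (insert c (T \ {c})) := sSup_le_sSup (Set.subset_insert_sdiff_singleton c T)
    _ = c ⊔ sSup (T \ {c}) := sSup_insert

end Frame

theorem stmt19_general {L : Type*} [Order.Frame L]
    (hc : CompactFrame L) (hr : RegularFrame L)
    (a c : L) :
    a ⊔ c = ⊤ ↔ ∃ b : L, RatherBelow b a ∧ RatherBelow bᶜ c := by
  refine ⟨fun h => ?_, fun ⟨b, hb, hbc⟩ => sup_eq_top_of_ratherBelow_of_ratherBelow_compl hb hbc⟩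
  have hcover : c ⊔ sSup {b : L | RatherBelow b a} = ⊤ := by rw [← hr a, sup_comm, h]
  obtain ⟨b, hb, hcb⟩ :=
    hc.exists_mem_sup_eq_top (supClosed_ratherBelow a) (ratherBelow_bot a) hcover
  exact ⟨b, hb, ratherBelow_compl_of_sup_eq_top hcb⟩

theorem stmt19 {L : Type*} [Order.Frame L]
    (hc : CompactFrame L) (hr : RegularFrame L)
    (a c : L) (ha : a ≠ ⊤) (hcne : c ≠ ⊤) :
    a ⊔ c = ⊤ ↔ ∃ b : L, RatherBelow b a ∧ RatherBelow bᶜ c :=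
  stmt19_general hc hr a c
end
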